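/- Convolution identity relating impulse response function and point spread function: Let f : ℝ² → ℂ be a Schwartz function and φ : ℝ → ℝ an even Schwartz function. Define the filtered initial pressure g : ℝ² → ℂ by (ℱg)(ξ) = (ℱφ)(‖ξ‖) · (ℱf)(ξ) (i.e. g = Φ ∗ f where ℱΦ(ξ) = ℱ_tφ(‖ξ‖)), and define the wave solutions p_f(x, t) = (2π)^{-2} ∫_{ℝ²} cos(t‖ξ‖) (ℱf)(ξ) e^{i⟨x, ξ⟩} dξ and p_g(x, t) = (2π)^{-2} ∫_{ℝ²} cos(t‖ξ‖) (ℱg)(ξ) e^{i⟨x, ξ⟩} dξ. Then for all x ∈ ℝ² and t ∈ ℝ, ∫_ℝ φ(t − s) p_f(x, s) ds = p_g(x, t); that is, φ ∗_t (W f) = W(Φ ∗ f). -/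

import Mathlib

open MeasureTheory

noncomputable section

/-- The plane `ℝ²` as a Euclidean space. -/
abbrev E2 := EuclideanSpace ℝ (Fin 2)

/-- Fourier transform on `ℝ²` with the convention `ℱf(ξ) = ∫ f(x) e^{-i⟨x,ξ⟩} dx`. -/
def fourier2 (f : E2 → ℂ) (ξ : E2) : ℂ :=
  ∫ x : E2, Complex.exp (-(Complex.I * ((inner ℝ x ξ : ℝ) : ℂ))) * f x

/-- Fourier transform on `ℝ` with the convention `ℱg(ω) = ∫ g(t) e^{-iωt} dt`. -/
def fourier1 (g : ℝ → ℂ) (ω : ℝ) : ℂ :=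
  ∫ t : ℝ, Complex.exp (-(Complex.I * ω * t)) * g t

/-- The wave solution with prescribed spatial Fourier data `F`:
`p(x,t) = (2π)⁻² ∫ cos(t‖ξ‖) F(ξ) e^{i⟨x,ξ⟩} dξ`. -/
def waveSolF (F : E2 → ℂ) (x : E2) (t : ℝ) : ℂ :=
  (1 / (2 * Real.pi) ^ 2 : ℂ) *
    ∫ ξ : E2, (Real.cos (t * ‖ξ‖) : ℂ) * F ξ *
      Complex.exp (Complex.I * ((inner ℝ x ξ : ℝ) : ℂ))

/-! The temporal convolution commutes with the frequency integral by Fubini, so it suffices to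
convolve each mode `s ↦ cos(s‖ξ‖)` with `φ`. For even `φ` the sine part of
`cos((t - u)ω) = cos(tω) cos(uω) + sin(tω) sin(uω)` integrates to zero against `φ`, and so does the
sine part of `e^{-iωu}`; hence `φ ∗ₜ cos(·ω) = cos(tω) ℱφ(ω)`, which is the mode of `W(Φ ∗ f)`. -/

open Real
open scoped FourierTransform InnerProductSpace

lemma fourier2_eq_fourier_smul (f : E2 → ℂ) (ξ : E2) :
    fourier2 f ξ = 𝓕 f ((2 * π)⁻¹ • ξ) := by
  rw [Real.fourier_eq', fourier2]
  congr 1 with x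
  rw [smul_eq_mul, real_inner_smul_right,
    show -2 * π * ((2 * π)⁻¹ * ⟪x, ξ⟫_ℝ) = -⟪x, ξ⟫_ℝ by field_simp]
  push_cast
  ring_nf

lemma integrable_fourier2 (f : SchwartzMap E2 ℂ) : Integrable (fourier2 f) := by
  simp_rw [funext (fourier2_eq_fourier_smul f)]
  exact (𝓕 f).integrable.comp_smul (inv_ne_zero (by positivity))

section EvenFunction

variable {g : ℝ → ℂ}

lemma integrable_ofReal_mul_of_abs_le_one (hg : Integrable g) {c : ℝ → ℝ} (hc : Continuous c)
    (hc_le : ∀ u, |c u| ≤ 1) : Integrable fun u => (c u : ℂ) * g u :=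
  hg.bdd_mul (by fun_prop) (.of_forall fun u => by simpa using hc_le u)

lemma integral_sin_mul_eq_zero_of_even (heven : ∀ t, g (-t) = g t) (ω : ℝ) :
    ∫ u, (sin (ω * u) : ℂ) * g u = 0 := by
  have hodd : (∫ u, (sin (ω * -u) : ℂ) * g (-u)) = -∫ u, (sin (ω * u) : ℂ) * g u := by
    rw [← integral_neg]
    congr 1 with u
    rw [heven, mul_neg, sin_neg]
    push_cast
    ring
  have := integral_neg_eq_self (fun u => (sin (ω * u) : ℂ) * g u) volume
  rw [hodd] at this
  linear_combination (-1 / 2 : ℂ) * this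

lemma fourier1_eq_integral_cos_mul (hg : Integrable g) (heven : ∀ t, g (-t) = g t) (ω : ℝ) :
    fourier1 g ω = ∫ u, (cos (ω * u) : ℂ) * g u := by
  have hexp : ∀ u : ℝ, Complex.exp (-(Complex.I * ω * u)) * g u =
      (cos (ω * u) : ℂ) * g u - Complex.I * ((sin (ω * u) : ℂ) * g u) := by
    intro u
    rw [show -(Complex.I * ω * u) = ((-(ω * u) : ℝ) : ℂ) * Complex.I by push_cast; ring,
      Complex.exp_mul_I, ← Complex.ofReal_cos, ← Complex.ofReal_sin, cos_neg, sin_neg]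
    push_cast
    ring
  rw [fourier1]
  simp_rw [hexp]
  rw [integral_sub (integrable_ofReal_mul_of_abs_le_one hg (by fun_prop) fun _ => abs_cos_le_one _)
      ((integrable_ofReal_mul_of_abs_le_one hg (by fun_prop) fun _ => abs_sin_le_one _).const_mul _),
    integral_const_mul, integral_sin_mul_eq_zero_of_even heven, mul_zero, sub_zero]

lemma integral_mul_cos_eq_cos_mul_fourier1 (hg : Integrable g) (heven : ∀ t, g (-t) = g t)
    (t ω : ℝ) :
    ∫ s, g (t - s) * (cos (s * ω) : ℂ) = (cos (t * ω) : ℂ) * fourier1 g ω := by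
  have hsub : ∫ s, g (t - s) * (cos (s * ω) : ℂ) = ∫ u, g u * (cos ((t - u) * ω) : ℂ) := by
    rw [← integral_sub_left_eq_self (fun u => g u * (cos ((t - u) * ω) : ℂ)) volume t]
    simp only [sub_sub_cancel]
  have hcos_sub : ∀ u, g u * (cos ((t - u) * ω) : ℂ) =
      (cos (t * ω) : ℂ) * ((cos (ω * u) : ℂ) * g u) +
        (sin (t * ω) : ℂ) * ((sin (ω * u) : ℂ) * g u) := by
    intro u
    rw [sub_mul, cos_sub, mul_comm u ω]
    push_cast
    ring
  rw [hsub, fourier1_eq_integral_cos_mul hg heven]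
  simp_rw [hcos_sub]
  rw [integral_add
      ((integrable_ofReal_mul_of_abs_le_one hg (by fun_prop) fun _ => abs_cos_le_one _).const_mul _)
      ((integrable_ofReal_mul_of_abs_le_one hg (by fun_prop) fun _ => abs_sin_le_one _).const_mul _),
    integral_const_mul, integral_const_mul, integral_sin_mul_eq_zero_of_even heven, mul_zero,
    add_zero]

end EvenFunction

lemma integral_mul_waveSolF {g : ℝ → ℂ} (hg : Integrable g) {F : E2 → ℂ} (hF : Integrable F)
    (x : E2) (t : ℝ) :
    ∫ s, g (t - s) * waveSolF F x s =
      (1 / (2 * π) ^ 2 : ℂ) * ∫ ξ : E2, (∫ s, g (t - s) * (cos (s * ‖ξ‖) : ℂ)) *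
        (F ξ * Complex.exp (Complex.I * (⟪x, ξ⟫_ℝ : ℂ))) := by
  set K : E2 → ℂ := fun ξ => F ξ * Complex.exp (Complex.I * (⟪x, ξ⟫_ℝ : ℂ))
  have hK : Integrable K :=
    hF.mul_bdd (c := 1) (by fun_prop) (.of_forall fun ξ => by simp [Complex.norm_exp])
  have hprod : Integrable (fun p : ℝ × E2 => (cos (p.1 * ‖p.2‖) : ℂ) * (g (t - p.1) * K p.2))
      (volume.prod volume) :=
    ((hg.comp_sub_left t).mul_prod hK).bdd_mul (c := 1) (by fun_prop)
      (.of_forall fun p => by rw [Complex.norm_real, norm_eq_abs]; exact abs_cos_le_one _)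
  calc ∫ s, g (t - s) * waveSolF F x s
      = (1 / (2 * π) ^ 2 : ℂ) * ∫ s, ∫ ξ, (cos (s * ‖ξ‖) : ℂ) * (g (t - s) * K ξ) := by
        simp_rw [waveSolF, ← integral_const_mul]
        congr 1 with s
        congr 1 with ξ
        ring
    _ = (1 / (2 * π) ^ 2 : ℂ) * ∫ ξ, ∫ s, (cos (s * ‖ξ‖) : ℂ) * (g (t - s) * K ξ) := by
        rw [integral_integral_swap hprod]
    _ = _ := by
        simp_rw [← integral_mul_const]
        congr 2 with ξ
        congr 1 with s
        ring

/-- **Convolution identity relating the impulse response function and the point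
spread function** (`φ ∗ₜ (W f) = W (Φ ∗ f)`).  Here `f` is a Schwartz initial
pressure, `φ` an even Schwartz impulse response, `p_f = waveSolF (ℱf)` the wave
solution for `f`, and `p_g = waveSolF (ℱφ(‖·‖)·ℱf)` the wave solution for the
filtered source `g = Φ ∗ f` whose Fourier transform is `ℱg(ξ) = ℱφ(‖ξ‖) ℱf(ξ)`. -/
theorem temporal_convolution_eq_wave_of_filtered
    (f : SchwartzMap E2 ℂ) (φ : SchwartzMap ℝ ℝ)
    (hφeven : ∀ t : ℝ, φ (-t) = φ t) :
    ∀ (x : E2) (t : ℝ),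
      (∫ s : ℝ, (φ (t - s) : ℂ) * waveSolF (fourier2 f) x s) =
        waveSolF (fun ξ : E2 => fourier1 (fun s : ℝ => (φ s : ℂ)) ‖ξ‖ * fourier2 f ξ) x t := by
  intro x t
  have hφ : Integrable fun s => (φ s : ℂ) := φ.integrable.ofReal
  have hφeven' : ∀ s, (φ (-s) : ℂ) = φ s := fun s => by rw [hφeven]
  rw [integral_mul_waveSolF hφ (integrable_fourier2 f), waveSolF]
  simp_rw [integral_mul_cos_eq_cos_mul_fourier1 hφ hφeven']
  congr 2 with ξ
  ring
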